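/- Let f : Ω_+ + e → ℝ be continuous with f(x) + f(y) = f(P(x^{1/2})y) for all x, y ∈ Ω_+ + e, where Ω_+ + e = {x ∈ Ω_+ : x − e ∈ Ω_+}. For x ∈ Ω_+ let t_x = 2/λ_min(x), where λ_min(x) is the smallest eigenvalue of x, and define the extension f̄ : Ω_+ → ℝ by f̄(x) = f(x) if x ∈ Ω_+ + e and f̄(x) = f(t_x·x) − f(t_x·e) otherwise. Then f̄(x) + f̄(y) = f̄(P(x^{1/2})y) for all x, y ∈ Ω_+. -/

import Mathlib

/-! For `u ∈ Ω₊ + e` and `s > 1` the equation gives `f u + f (s e) = f (s u)`, so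
`f (s x) - f (s e)` does not depend on `s` as long as `s x ∈ Ω₊ + e`; hence
`f̄ x = f (t x) - f (t e)` for every large enough `t`. Taking `t` large for `x`, `y` and `t²`
large for `P(x^{1/2}) y`, the equation for `f̄` follows from the equation for `f` at
`(t x, t y)` and at `(t e, t e)`, because `P((t x)^{1/2}) (t y) = t² P(x^{1/2}) y`. -/

open Matrix

abbrev Mat (r : ℕ) : Type := Matrix (Fin r) (Fin r) ℝ

open Classical in
/-- the square root of a positive semidefinite matrix (junk value `0` otherwise) -/
noncomputable def msqrt {r : ℕ} (x : Mat r) : Mat r :=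
  if h : x.PosSemidef then
    h.1.eigenvectorUnitary.1 * diagonal ((RCLike.ofReal : ℝ → ℝ) ∘ (√·) ∘ h.1.eigenvalues) *
      (star h.1.eigenvectorUnitary : Mat r)
  else 0

open Classical in
/-- the smallest eigenvalue of a Hermitian (symmetric) matrix (junk value `0` otherwise) -/
noncomputable def lamMin {r : ℕ} (x : Mat r) : ℝ :=
  if h : x.IsHermitian then ⨅ i, h.eigenvalues i else 0

/-- the shifted cone `Ω₊ + e = {x ∈ Ω₊ : x - e ∈ Ω₊}` -/
def shiftedCone (r : ℕ) : Set (Mat r) := {x | x.PosDef ∧ (x - 1).PosDef}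

open Filter
open scoped MatrixOrder

variable {r : ℕ}

lemma msqrt_eq_cfcSqrt {x : Mat r} (hx : x.PosSemidef) : msqrt x = CFC.sqrt x := by
  rw [CFC.sqrt_eq_real_sqrt x hx.nonneg,
    cfcₙ_eq_cfc (hf := Real.continuous_sqrt.continuousOn) (hf0 := Real.sqrt_zero), hx.1.cfc_eq,
    Matrix.IsHermitian.cfc, msqrt, dif_pos hx, Unitary.conjStarAlgAut_apply]

lemma msqrt_mul_msqrt {x : Mat r} (hx : x.PosSemidef) : msqrt x * msqrt x = x := by
  rw [msqrt_eq_cfcSqrt hx]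
  exact CFC.sqrt_mul_sqrt_self x hx.nonneg

lemma msqrt_smul {x : Mat r} (hx : x.PosSemidef) {t : ℝ} (ht : 0 ≤ t) :
    msqrt (t • x) = √t • msqrt x := by
  rw [msqrt_eq_cfcSqrt (hx.smul ht), msqrt_eq_cfcSqrt hx]
  refine CFC.sqrt_unique ?_ (smul_nonneg (Real.sqrt_nonneg t) (CFC.sqrt_nonneg x))
  rw [smul_mul_smul_comm, Real.mul_self_sqrt ht, CFC.sqrt_mul_sqrt_self x hx.nonneg]

lemma msqrt_smul_mul_smul_mul_msqrt_smul {x : Mat r} (hx : x.PosSemidef) (y : Mat r) {t : ℝ}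
    (ht : 0 ≤ t) :
    msqrt (t • x) * (t • y) * msqrt (t • x) = (t * t) • (msqrt x * y * msqrt x) := by
  rw [msqrt_smul hx ht]
  simp only [smul_mul_assoc, mul_smul_comm, smul_smul]
  congr 1
  linear_combination t * Real.mul_self_sqrt ht

lemma posDef_msqrt_mul_mul_msqrt {x y : Mat r} (hx : x.PosDef) (hy : y.PosDef) :
    (msqrt x * y * msqrt x).PosDef := by
  rw [msqrt_eq_cfcSqrt hx.posSemidef, ← CFC.conjSqrt_apply, ← isStrictlyPositive_iff_posDef,
    CFC.isStrictlyPositive_conjSqrt_iff x y hx.isStrictlyPositive]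
  exact hy.isStrictlyPositive

lemma lamMin_le_eigenvalues {x : Mat r} (hx : x.IsHermitian) (i : Fin r) :
    lamMin x ≤ hx.eigenvalues i := by
  rw [lamMin, dif_pos hx]
  exact ciInf_le (Set.finite_range _).bddBelow i

lemma lamMin_pos (hr : 1 ≤ r) {x : Mat r} (hx : x.PosDef) : 0 < lamMin x := by
  have : Nonempty (Fin r) := ⟨⟨0, hr⟩⟩
  obtain ⟨i, hi⟩ := exists_eq_ciInf_of_finite (f := hx.1.eigenvalues)
  rw [lamMin, dif_pos hx.1, ← hi]
  exact hx.eigenvalues_pos i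

lemma posSemidef_sub_lamMin_smul_one {x : Mat r} (hx : x.IsHermitian) :
    (x - lamMin x • (1 : Mat r)).PosSemidef := by
  have h : algebraMap ℝ (Mat r) (lamMin x) ≤ x := by
    refine (algebraMap_le_iff_le_spectrum (ha := hx)).2 ?_
    rw [hx.spectrum_real_eq_range_eigenvalues]
    rintro _ ⟨i, rfl⟩
    exact lamMin_le_eigenvalues hx i
  rwa [Matrix.le_iff, Algebra.algebraMap_eq_smul_one] at h

lemma posDef_smul_sub_one {x : Mat r} (hx : x.IsHermitian) {t : ℝ} (ht : 0 ≤ t)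
    (h : 1 < t * lamMin x) : (t • x - 1).PosDef := by
  have hsplit : t • x - 1 = t • (x - lamMin x • (1 : Mat r)) + (t * lamMin x - 1) • 1 := by
    module
  rw [hsplit]
  exact .posSemidef_add ((posSemidef_sub_lamMin_smul_one hx).smul ht) (.smul .one (by linarith))

lemma lamMin_le_one_of_not_posDef_sub_one {x : Mat r} (hx : x.IsHermitian)
    (h : ¬(x - 1).PosDef) : lamMin x ≤ 1 := by
  contrapose! h
  simpa using posDef_smul_sub_one hx zero_le_one (by simpa using h)

lemma smul_mem_shiftedCone {x : Mat r} (hx : x.PosDef) {t : ℝ} (ht : 0 < t)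
    (h : 1 < t * lamMin x) : t • x ∈ shiftedCone r :=
  ⟨hx.smul ht, posDef_smul_sub_one hx.1 ht.le h⟩

lemma eventually_smul_mem_shiftedCone (hr : 1 ≤ r) {x : Mat r} (hx : x.PosDef) :
    ∀ᶠ t : ℝ in atTop, t • x ∈ shiftedCone r := by
  filter_upwards [eventually_gt_atTop (lamMin x)⁻¹] with t ht
  have hl := lamMin_pos hr hx
  exact smul_mem_shiftedCone hx ((inv_pos.2 hl).trans ht) ((inv_lt_iff_one_lt_mul₀ hl).1 ht)

lemma smul_one_mem_shiftedCone {s : ℝ} (hs : 1 < s) : s • (1 : Mat r) ∈ shiftedCone r := by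
  refine ⟨.smul .one (by linarith), ?_⟩
  have h : s • (1 : Mat r) - 1 = (s - 1) • 1 := by module
  exact h ▸ .smul .one (sub_pos.2 hs)

def SatisfiesCauchyEqOn (s : Set (Mat r)) (f : Mat r → ℝ) : Prop :=
  ∀ x ∈ s, ∀ y ∈ s, f x + f y = f (msqrt x * y * msqrt x)

open Classical in
noncomputable def coneExtension (f : Mat r → ℝ) (x : Mat r) : ℝ :=
  if (x - 1).PosDef then f x
  else f ((2 / lamMin x) • x) - f ((2 / lamMin x) • (1 : Mat r))

namespace SatisfiesCauchyEqOn

variable {f : Mat r → ℝ}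

lemma add_map_smul_one (hf : SatisfiesCauchyEqOn (shiftedCone r) f) {u : Mat r}
    (hu : u ∈ shiftedCone r) {s : ℝ} (hs : 1 < s) :
    f u + f (s • 1) = f (s • u) := by
  rw [hf u hu _ (smul_one_mem_shiftedCone hs), mul_smul_comm, mul_one, smul_mul_assoc,
    msqrt_mul_msqrt hu.1.posSemidef]

lemma map_smul_sub_map_smul_one_eq (hf : SatisfiesCauchyEqOn (shiftedCone r) f)
    {x : Mat r} {s t : ℝ} (hs : 1 < s) (ht : 1 < t) (hsx : s • x ∈ shiftedCone r)
    (htx : t • x ∈ shiftedCone r) :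
    f (s • x) - f (s • 1) = f (t • x) - f (t • 1) := by
  have hst := hf.add_map_smul_one hsx ht
  have hts := hf.add_map_smul_one htx hs
  rw [smul_smul] at hst hts
  rw [mul_comm] at hst
  linarith

lemma coneExtension_eq (hf : SatisfiesCauchyEqOn (shiftedCone r) f) (hr : 1 ≤ r) {x : Mat r}
    (hx : x.PosDef) {t : ℝ} (ht : 1 < t) (htx : t • x ∈ shiftedCone r) :
    coneExtension f x = f (t • x) - f (t • 1) := by
  by_cases hx1 : (x - 1).PosDef
  · rw [coneExtension, if_pos hx1]
    linarith [hf.add_map_smul_one ⟨hx, hx1⟩ ht]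
  · have hl := lamMin_pos hr hx
    have h2 : 1 < 2 / lamMin x := by
      rw [one_lt_div hl]
      linarith [lamMin_le_one_of_not_posDef_sub_one hx.1 hx1]
    have h2x : (2 / lamMin x) • x ∈ shiftedCone r :=
      smul_mem_shiftedCone hx (by positivity) (by rw [div_mul_cancel₀ _ hl.ne']; norm_num)
    rw [coneExtension, if_neg hx1]
    exact hf.map_smul_sub_map_smul_one_eq h2 ht h2x htx

end SatisfiesCauchyEqOn

open Classical in
theorem extension_satisfies_equation_general {r : ℕ} (hr : 1 ≤ r) (f : Mat r → ℝ)
    (heq : ∀ x ∈ shiftedCone r, ∀ y ∈ shiftedCone r,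
      f x + f y = f (msqrt x * y * msqrt x))
    (fbar : Mat r → ℝ)
    (hfbar : fbar = fun x =>
      if (x - 1).PosDef then f x
      else f ((2 / lamMin x) • x) - f ((2 / lamMin x) • (1 : Mat r))) :
    ∀ x y : Mat r, x.PosDef → y.PosDef →
      fbar x + fbar y = fbar (msqrt x * y * msqrt x) := by
  intro x y hx hy
  have hf : SatisfiesCauchyEqOn (shiftedCone r) f := heq
  have hz := posDef_msqrt_mul_mul_msqrt hx hy
  obtain ⟨t, ht, htx, hty, htz⟩ := ((eventually_gt_atTop 1).and <|
    (eventually_smul_mem_shiftedCone hr hx).and <| (eventually_smul_mem_shiftedCone hr hy).and <|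
    (tendsto_id.atTop_mul_atTop₀ tendsto_id).eventually
      (eventually_smul_mem_shiftedCone hr hz)).exists
  have hxy : f (t • x) + f (t • y) = f ((t * t) • (msqrt x * y * msqrt x)) := by
    rw [heq _ htx _ hty, msqrt_smul_mul_smul_mul_msqrt_smul hx.posSemidef y (by linarith)]
  have hone : f (t • 1) + f (t • 1) = f ((t * t) • 1) := by
    rw [hf.add_map_smul_one (smul_one_mem_shiftedCone ht) ht, smul_smul]
  subst hfbar
  change coneExtension f x + coneExtension f y = coneExtension f _
  rw [hf.coneExtension_eq hr hx ht htx, hf.coneExtension_eq hr hy ht hty,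
    hf.coneExtension_eq hr hz (one_lt_mul ht.le ht) htz]
  linarith

open Classical in
/-- **Extension of a multiplicative-Cauchy-type functional equation from `Ω₊ + e`
to the whole cone `Ω₊`.**  If continuous `f` on `Ω₊ + e` satisfies
`f(x) + f(y) = f(P(x^{1/2})y)` there, then its extension
`f̄(x) = f(x)` for `x ∈ Ω₊ + e`, `f̄(x) = f(tₓ x) - f(tₓ e)` otherwise (`tₓ = 2/λ_min(x)`),
satisfies the same equation on all of `Ω₊`. -/
theorem extension_satisfies_equation {r : ℕ} (hr : 1 ≤ r) (f : Mat r → ℝ)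
    (hcont : ContinuousOn f (shiftedCone r))
    (heq : ∀ x ∈ shiftedCone r, ∀ y ∈ shiftedCone r,
      f x + f y = f (msqrt x * y * msqrt x))
    (fbar : Mat r → ℝ)
    (hfbar : fbar = fun x =>
      if (x - 1).PosDef then f x
      else f ((2 / lamMin x) • x) - f ((2 / lamMin x) • (1 : Mat r))) :
    ∀ x y : Mat r, x.PosDef → y.PosDef →
      fbar x + fbar y = fbar (msqrt x * y * msqrt x) :=
  extension_satisfies_equation_general hr f heq fbar hfbar
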